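/- arXiv:1812.06860 — 3 statements merged into one kernel-verified Lean document; each statement's English description precedes it below -/
import Mathlib

section
/- Consider the linear error dynamics e(k+1) = A_K e(k) + w(k) in R^{n_x} with e(0) = 0, where w(0), w(1), ... are independent, identically distributed square-integrable random vectors with zero mean and covariance matrix Sigma^w. Suppose Sigma_inf is a positive definite matrix solving the discrete Lyapunov equation Sigma_inf = A_K Sigma_inf A_K^T + Sigma^w. Then for every p_tilde > 0 and every n >= 0, Pr( e(n)^T Sigma_inf^{-1} e(n) <= p_tilde ) >= 1 - n_x / p_tilde; that is, the ellipsoid {x in R^{n_x} : x^T Sigma_inf^{-1} x <= p_tilde} is a probabilistic reachable set of probability level 1 - n_x/p_tilde for the error process at every time step. -/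
/-!
The second moment `C k = E[e k (e k)ᵀ]` obeys `C (k+1) = A_K C k A_Kᵀ + Σʷ`: the cross terms vanish
because `e k` is a function of `w 0, …, w (k-1)`, hence independent of the centred `w k`.
Subtracting this from the Lyapunov equation gives `Σ∞ - C (k+1) = A_K (Σ∞ - C k) A_Kᵀ`, so
`Σ∞ - C n` stays positive semidefinite, starting from `C 0 = 0`. Therefore
`E[e nᵀ Σ∞⁻¹ e n] = tr (Σ∞⁻¹ C n) ≤ tr (Σ∞⁻¹ Σ∞) = n_x`, and Markov's inequality concludes.
-/

open MeasureTheory ProbabilityTheory Matrix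
open scoped ENNReal

namespace Matrix

variable {n : Type*} [Fintype n]

open scoped ComplexOrder in
theorem PosSemidef.trace_mul_nonneg {𝕜 : Type*} [RCLike 𝕜] [DecidableEq n] {A B : Matrix n n 𝕜}
    (hA : A.PosSemidef)
    (hB : B.PosSemidef) : 0 ≤ (A * B).trace := by
  open scoped MatrixOrder in
  obtain ⟨C, rfl⟩ := CStarAlgebra.nonneg_iff_eq_star_mul_self.mp hA.nonneg
  rw [star_eq_conjTranspose, Matrix.mul_assoc, trace_mul_comm]
  exact (hB.mul_mul_conjTranspose_same C).trace_nonneg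

theorem trace_inv_mul_le_card_of_posSemidef_sub [DecidableEq n] {S C : Matrix n n ℝ}
    (hS : S.PosDef) (hSC : (S - C).PosSemidef) : (S⁻¹ * C).trace ≤ Fintype.card n := by
  have h := hS.posSemidef.inv.trace_mul_nonneg hSC
  rw [Matrix.mul_sub, trace_sub, nonsing_inv_mul _ ((isUnit_iff_isUnit_det S).mp hS.isUnit),
    trace_one] at h
  linarith

theorem posSemidef_sub_of_lyapunov {A P S : Matrix n n ℝ} {C : ℕ → Matrix n n ℝ}
    (hP : P = A * P * Aᵀ + S) (hC : ∀ k, C (k + 1) = A * C k * Aᵀ + S)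
    (h0 : (P - C 0).PosSemidef) (k : ℕ) : (P - C k).PosSemidef := by
  induction k with
  | zero => exact h0
  | succ k ih =>
    have h : P - C (k + 1) = A * (P - C k) * Aᴴ := by
      rw [hC k, conjTranspose_eq_transpose_of_trivial]
      nth_rewrite 1 [hP]
      noncomm_ring
    exact h ▸ ih.mul_mul_conjTranspose_same A

end Matrix

section SecondMoment

variable {Ω ι : Type*} [MeasurableSpace Ω] {μ : Measure Ω}

noncomputable def secondMoment (μ : Measure Ω) (X : Ω → ι → ℝ) : Matrix ι ι ℝ :=
  of fun i j => ∫ ω, X ω i * X ω j ∂μ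

@[simp]
theorem secondMoment_apply (X : Ω → ι → ℝ) (i j : ι) :
    secondMoment μ X i j = ∫ ω, X ω i * X ω j ∂μ := rfl

variable {X Y : Ω → ι → ℝ}

theorem secondMoment_add (hX : ∀ i, MemLp (fun ω => X ω i) 2 μ)
    (hY : ∀ i, MemLp (fun ω => Y ω i) 2 μ) (hXY : ∀ i j, ∫ ω, X ω i * Y ω j ∂μ = 0) :
    secondMoment μ (X + Y) = secondMoment μ X + secondMoment μ Y := by
  ext i j
  have hxx : Integrable (fun ω => X ω i * X ω j) μ := (hX i).integrable_mul (hX j)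
  have hxy : Integrable (fun ω => X ω i * Y ω j) μ := (hX i).integrable_mul (hY j)
  have hyx : Integrable (fun ω => X ω j * Y ω i) μ := (hX j).integrable_mul (hY i)
  have hyy : Integrable (fun ω => Y ω i * Y ω j) μ := (hY i).integrable_mul (hY j)
  have hexpand : ∀ ω, (X + Y) ω i * (X + Y) ω j
      = X ω i * X ω j + (X ω i * Y ω j + (X ω j * Y ω i + Y ω i * Y ω j)) := fun ω => by
    simp only [Pi.add_apply]; ring
  simp only [secondMoment_apply, Matrix.add_apply, hexpand]
  rw [integral_add hxx (hxy.fun_add (hyx.fun_add hyy)), integral_add hxy (hyx.fun_add hyy),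
    integral_add hyx hyy, hXY, hXY, zero_add, zero_add]

variable [Fintype ι]

theorem memLp_mulVec_apply {κ : Type*} {p : ℝ≥0∞} (A : Matrix κ ι ℝ)
    (hX : ∀ i, MemLp (fun ω => X ω i) p μ) (k : κ) :
    MemLp (fun ω => (A *ᵥ X ω) k) p μ :=
  memLp_finsetSum _ fun j _ => (hX j).const_mul (A k j)

theorem integral_sum_sum_mul_eq_sum_sum_secondMoment (c : ι → ι → ℝ)
    (hX : ∀ i, MemLp (fun ω => X ω i) 2 μ) :
    ∫ ω, ∑ i, ∑ j, c i j * (X ω i * X ω j) ∂μ = ∑ i, ∑ j, c i j * secondMoment μ X i j := by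
  have hint : ∀ i j, Integrable (fun ω => c i j * (X ω i * X ω j)) μ :=
    fun i j => ((hX i).integrable_mul (hX j)).const_mul _
  rw [integral_finsetSum _ fun i _ => integrable_finsetSum _ fun j _ => hint i j]
  refine Finset.sum_congr rfl fun i _ => ?_
  rw [integral_finsetSum _ fun j _ => hint i j]
  exact Finset.sum_congr rfl fun j _ => integral_const_mul _ _

theorem secondMoment_mulVec (A : Matrix ι ι ℝ) (hX : ∀ i, MemLp (fun ω => X ω i) 2 μ) :
    secondMoment μ (fun ω => A *ᵥ X ω) = A * secondMoment μ X * Aᵀ := by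
  ext k l
  have hexpand : ∀ ω, (A *ᵥ X ω) k * (A *ᵥ X ω) l
      = ∑ i, ∑ j, A k i * A l j * (X ω i * X ω j) := fun ω => by
    simp only [mulVec, dotProduct, Finset.sum_mul_sum]
    exact Finset.sum_congr rfl fun i _ => Finset.sum_congr rfl fun j _ => by ring
  simp only [secondMoment_apply, hexpand]
  rw [integral_sum_sum_mul_eq_sum_sum_secondMoment _ hX]
  simp only [mul_apply, transpose_apply, Finset.sum_mul]
  rw [Finset.sum_comm]
  exact Finset.sum_congr rfl fun j _ => Finset.sum_congr rfl fun i _ => by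
    rw [secondMoment_apply]; ring

theorem integral_dotProduct_mulVec_self (M : Matrix ι ι ℝ)
    (hX : ∀ i, MemLp (fun ω => X ω i) 2 μ) :
    ∫ ω, X ω ⬝ᵥ (M *ᵥ X ω) ∂μ = (M * secondMoment μ X).trace := by
  have hexpand : ∀ ω, X ω ⬝ᵥ (M *ᵥ X ω) = ∑ i, ∑ j, M i j * (X ω i * X ω j) := fun ω => by
    simp only [mulVec, dotProduct, Finset.mul_sum]
    exact Finset.sum_congr rfl fun i _ => Finset.sum_congr rfl fun j _ => by ring
  simp only [hexpand]
  rw [integral_sum_sum_mul_eq_sum_sum_secondMoment M hX]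
  simp only [trace, diag_apply, mul_apply, secondMoment_apply]
  exact Finset.sum_congr rfl fun i _ => Finset.sum_congr rfl fun j _ => by simp only [mul_comm]

theorem integrable_dotProduct_mulVec_self (M : Matrix ι ι ℝ)
    (hX : ∀ i, MemLp (fun ω => X ω i) 2 μ) :
    Integrable (fun ω => X ω ⬝ᵥ (M *ᵥ X ω)) μ :=
  integrable_finsetSum _ fun i _ => (hX i).integrable_mul (memLp_mulVec_apply M hX i)

theorem secondMoment_mulVec_add_of_indepFun (A : Matrix ι ι ℝ) {W : Ω → ι → ℝ}
    (hXW : IndepFun X W μ) (hX : ∀ i, MemLp (fun ω => X ω i) 2 μ)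
    (hW : ∀ i, MemLp (fun ω => W ω i) 2 μ) (hW0 : ∀ i, ∫ ω, W ω i ∂μ = 0) :
    secondMoment μ (fun ω => A *ᵥ X ω + W ω) = A * secondMoment μ X * Aᵀ + secondMoment μ W := by
  rw [← secondMoment_mulVec A hX]
  refine secondMoment_add (memLp_mulVec_apply A hX) hW fun i j => ?_
  have hφ : Measurable fun v : ι → ℝ => (A *ᵥ v) i := by fun_prop
  have hindep := hXW.comp hφ (measurable_pi_apply j)
  calc ∫ ω, (A *ᵥ X ω) i * W ω j ∂μ = (∫ ω, (A *ᵥ X ω) i ∂μ) * ∫ ω, W ω j ∂μ :=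
        hindep.integral_fun_mul_eq_mul_integral (memLp_mulVec_apply A hX i).aestronglyMeasurable
          (hW j).aestronglyMeasurable
    _ = 0 := by rw [hW0 j, mul_zero]

end SecondMoment

theorem ProbabilityTheory.iIndepFun.indepFun_of_measurable_biSup {Ω ι β γ : Type*}
    [MeasurableSpace Ω] {μ : Measure Ω} [mβ : MeasurableSpace β] [MeasurableSpace γ]
    {w : ι → Ω → β} (hw : iIndepFun w μ) (hmeas : ∀ i, Measurable (w i)) {S : Set ι} {j : ι}
    (hj : j ∉ S) {X : Ω → γ} (hX : Measurable[⨆ i ∈ S, mβ.comap (w i)] X) :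
    IndepFun X (w j) μ := by
  rw [IndepFun_iff_Indep]
  have h := indep_iSup_of_disjoint (fun i => (hmeas i).comap_le) hw
    (Set.disjoint_singleton_right.mpr hj)
  refine indep_of_indep_of_le_right (indep_of_indep_of_le_left h hX.comap_le) ?_
  exact le_iSup₂ (f := fun i (_ : i ∈ ({j} : Set ι)) => mβ.comap (w i)) j rfl

section LinearRecursion

variable {Ω ι : Type*} [Fintype ι] {A : Matrix ι ι ℝ} {w e : ℕ → Ω → ι → ℝ}

theorem measurable_biSup_comap_of_linear_recursion (he0 : ∀ ω, e 0 ω = 0)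
    (hrec : ∀ k ω, e (k + 1) ω = A *ᵥ e k ω + w k ω) (k : ℕ) :
    Measurable[⨆ j ∈ Set.Iio k, MeasurableSpace.comap (w j) inferInstance] (e k) := by
  induction k with
  | zero => rw [show e 0 = fun _ => 0 from funext he0]; exact measurable_const
  | succ k ih =>
    rw [show e (k + 1) = fun ω => A *ᵥ e k ω + w k ω from funext (hrec k)]
    have hmono : (⨆ j ∈ Set.Iio k, MeasurableSpace.comap (w j) inferInstance)
        ≤ ⨆ j ∈ Set.Iio (k + 1), MeasurableSpace.comap (w j) inferInstance :=
      biSup_mono fun j hj => Nat.lt_succ_of_lt hj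
    have hw : MeasurableSpace.comap (w k) inferInstance
        ≤ ⨆ j ∈ Set.Iio (k + 1), MeasurableSpace.comap (w j) inferInstance :=
      le_iSup₂ (f := fun j (_ : j ∈ Set.Iio (k + 1)) => MeasurableSpace.comap (w j) inferInstance)
        k (Nat.lt_succ_self k)
    have hA : Measurable fun v : ι → ℝ => A *ᵥ v := by fun_prop
    exact (hA.comp (ih.mono hmono le_rfl)).add ((comap_measurable (w k)).mono hw le_rfl)

theorem memLp_linear_recursion [MeasurableSpace Ω] {μ : Measure Ω}
    (hw : ∀ k i, MemLp (fun ω => w k ω i) 2 μ) (he0 : ∀ ω, e 0 ω = 0)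
    (hrec : ∀ k ω, e (k + 1) ω = A *ᵥ e k ω + w k ω) (k : ℕ) (i : ι) :
    MemLp (fun ω => e k ω i) 2 μ := by
  induction k generalizing i with
  | zero => simp only [he0, Pi.zero_apply, MemLp.zero']
  | succ k ih =>
    simp only [hrec]
    exact (memLp_mulVec_apply A ih i).add (hw k i)

theorem secondMoment_linear_recursion_succ [MeasurableSpace Ω] {μ : Measure Ω}
    (hmeas : ∀ k, Measurable (w k)) (hindep : iIndepFun w μ)
    (hw : ∀ k i, MemLp (fun ω => w k ω i) 2 μ) (hw0 : ∀ k i, ∫ ω, w k ω i ∂μ = 0)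
    (he0 : ∀ ω, e 0 ω = 0) (hrec : ∀ k ω, e (k + 1) ω = A *ᵥ e k ω + w k ω) (k : ℕ) :
    secondMoment μ (e (k + 1)) = A * secondMoment μ (e k) * Aᵀ + secondMoment μ (w k) := by
  rw [show e (k + 1) = fun ω => A *ᵥ e k ω + w k ω from funext (hrec k)]
  have hindep_k : IndepFun (e k) (w k) μ := hindep.indepFun_of_measurable_biSup hmeas
    Set.self_notMem_Iio (measurable_biSup_comap_of_linear_recursion he0 hrec k)
  exact secondMoment_mulVec_add_of_indepFun A hindep_k (memLp_linear_recursion hw he0 hrec k)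
    (hw k) (hw0 k)

end LinearRecursion

theorem one_sub_div_le_measureReal_le {Ω : Type*} [MeasurableSpace Ω] {μ : Measure Ω}
    [IsProbabilityMeasure μ] {f : Ω → ℝ} (hf0 : ∀ ω, 0 ≤ f ω) (hf : Integrable f μ) {c p : ℝ}
    (hc : ∫ ω, f ω ∂μ ≤ c) (hp : 0 < p) : 1 - c / p ≤ μ.real {ω | f ω ≤ p} := by
  have hmarkov : μ.real {ω | p ≤ f ω} ≤ c / p := by
    rw [le_div_iff₀ hp, mul_comm]
    exact (mul_meas_ge_le_integral_of_nonneg (ae_of_all μ hf0) hf p).trans hc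
  have hcover : 1 ≤ μ.real {ω | f ω ≤ p} + μ.real {ω | p ≤ f ω} :=
    calc 1 = μ.real Set.univ := probReal_univ.symm
      _ ≤ μ.real ({ω | f ω ≤ p} ∪ {ω | p ≤ f ω}) :=
        measureReal_mono fun ω _ => le_total (f ω) p
      _ ≤ _ := measureReal_union_le _ _
  linarith

theorem ellipsoidal_PRS_from_lyapunov_general
    {nx : ℕ} {Ω : Type*} [MeasurableSpace Ω] (μ : Measure Ω) [IsProbabilityMeasure μ]
    (A_K : Matrix (Fin nx) (Fin nx) ℝ)
    (w : ℕ → Ω → Fin nx → ℝ) (e : ℕ → Ω → Fin nx → ℝ)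
    (hmeas : ∀ k, Measurable (w k))
    (hindep : iIndepFun w μ)
    (hL2 : ∀ k l, MemLp (fun ω => w k ω l) 2 μ)
    (hmean0 : ∀ k l, (∫ ω, w k ω l ∂μ) = 0)
    (Sigmaw : Matrix (Fin nx) (Fin nx) ℝ)
    (hSigmaw : ∀ k l l', Sigmaw l l' = ∫ ω, w k ω l * w k ω l' ∂μ)
    (he0 : ∀ ω, e 0 ω = 0)
    (hrec : ∀ k ω, e (k + 1) ω = A_K *ᵥ e k ω + w k ω)
    (Sigmainf : Matrix (Fin nx) (Fin nx) ℝ)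
    (hpd : Sigmainf.PosDef)
    (hlyap : Sigmainf = A_K * Sigmainf * A_Kᵀ + Sigmaw) :
    ∀ ptilde : ℝ, 0 < ptilde → ∀ n : ℕ,
      (1 : ℝ) - (nx : ℝ) / ptilde ≤
        (μ {ω | e n ω ⬝ᵥ (Sigmainf⁻¹ *ᵥ e n ω) ≤ ptilde}).toReal := by
  intro ptilde hp n
  have heL2 := memLp_linear_recursion hL2 he0 hrec
  have hC (k : ℕ) :
      secondMoment μ (e (k + 1)) = A_K * secondMoment μ (e k) * A_Kᵀ + Sigmaw := by
    rw [secondMoment_linear_recursion_succ hmeas hindep hL2 hmean0 he0 hrec k]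
    congr 1
    ext l l'
    exact (hSigmaw k l l').symm
  have hC0 : secondMoment μ (e 0) = 0 := by
    ext l l'
    simp [he0]
  have hgap : (Sigmainf - secondMoment μ (e n)).PosSemidef :=
    posSemidef_sub_of_lyapunov (C := fun k => secondMoment μ (e k)) hlyap hC
      (by simpa [hC0] using hpd.posSemidef) n
  refine one_sub_div_le_measureReal_le (fun ω => ?_)
    (integrable_dotProduct_mulVec_self _ (heL2 n)) ?_ hp
  · simpa using hpd.posSemidef.inv.dotProduct_mulVec_nonneg (e n ω)
  · rw [integral_dotProduct_mulVec_self _ (heL2 n)]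
    simpa using trace_inv_mul_le_card_of_posSemidef_sub hpd hgap

/-- For the linear error dynamics `e (k+1) = A_K ⬝ e k + w k` with `e 0 = 0` and i.i.d.
square-integrable zero-mean disturbances of covariance `Sigmaw`, if the positive definite
matrix `Sigmainf` solves the Lyapunov equation `Sigmainf = A_K * Sigmainf * A_Kᵀ + Sigmaw`,
then for every `ptilde > 0` and every `n`,
`Pr(e(n)ᵀ Sigmainf⁻¹ e(n) ≤ ptilde) ≥ 1 - nx / ptilde`, i.e. the ellipsoid
`{x | xᵀ Sigmainf⁻¹ x ≤ ptilde}` is a PRS of level `1 - nx / ptilde` at every time step. -/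
theorem ellipsoidal_PRS_from_lyapunov
    {nx : ℕ} {Ω : Type*} [MeasurableSpace Ω] (μ : Measure Ω) [IsProbabilityMeasure μ]
    (A_K : Matrix (Fin nx) (Fin nx) ℝ)
    (w : ℕ → Ω → Fin nx → ℝ) (e : ℕ → Ω → Fin nx → ℝ)
    (hmeas : ∀ k, Measurable (w k))
    (hindep : iIndepFun w μ)
    (hident : ∀ k, Measure.map (w k) μ = Measure.map (w 0) μ)
    (hL2 : ∀ k l, MemLp (fun ω => w k ω l) 2 μ)
    (hmean0 : ∀ k l, (∫ ω, w k ω l ∂μ) = 0)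
    (Sigmaw : Matrix (Fin nx) (Fin nx) ℝ)
    (hSigmaw : ∀ k l l', Sigmaw l l' = ∫ ω, w k ω l * w k ω l' ∂μ)
    (he0 : ∀ ω, e 0 ω = 0)
    (hrec : ∀ k ω, e (k + 1) ω = A_K *ᵥ e k ω + w k ω)
    (Sigmainf : Matrix (Fin nx) (Fin nx) ℝ)
    (hpd : Sigmainf.PosDef)
    (hlyap : Sigmainf = A_K * Sigmainf * A_Kᵀ + Sigmaw) :
    ∀ ptilde : ℝ, 0 < ptilde → ∀ n : ℕ,
      (1 : ℝ) - (nx : ℝ) / ptilde ≤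
        (μ {ω | e n ω ⬝ᵥ (Sigmainf⁻¹ *ᵥ e n ω) ≤ ptilde}).toReal :=
  ellipsoidal_PRS_from_lyapunov_general μ A_K w e hmeas hindep hL2 hmean0 Sigmaw hSigmaw he0 hrec
    Sigmainf hpd hlyap
end

section
/- Let A be an n_x-by-n_x matrix, B an n_x-by-n_u matrix, K an n_u-by-n_x matrix, X and U convex constraint sets, R^x_0, ..., R^x_{Nbar} and R^u_0, ..., R^u_{Nbar} tightening sets, and R_f a terminal tightening set such that R_f contains R^x_j and K R_f (the image of R_f under K) contains R^u_j for all 0 <= j <= Nbar. Suppose the terminal set Z_f is contained in the Pontryagin difference of X and R_f, is positively invariant under v = Kz (i.e., (A + BK)z is in Z_f for all z in Z_f), and satisfies K Z_f contained in the Pontryagin difference of U and K R_f. Fix a time k with k + 1 <= Nbar - N and suppose inputs v_0, ..., v_{N-1} and states z_0, ..., z_N with z_{i+1} = A z_i + B v_i satisfy z_i in X minus R^x_{i+k} and v_i in U minus R^u_{i+k} for i = 0, ..., N-1, and z_N in Z_f. Then the shifted candidate inputs vbar_i = v_{i+1} for i = 0, ..., N-2 and vbar_{N-1} = K z_N, with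 candidate states zbar_i = z_{i+1} for i = 0, ..., N-1 and zbar_N = (A + BK) z_N, satisfy zbar_{i+1} = A zbar_i + B vbar_i, zbar_i in X minus R^x_{i+k+1} and vbar_i in U minus R^u_{i+k+1} for i = 0, ..., N-1, and zbar_N in Z_f. (This establishes recursive feasibility of the stochastic MPC optimization problem.) -/
open Matrix

/-- The Pontryagin set difference `A ⊖ B = {a | a + b ∈ A for all b ∈ B}`. -/
def pontryaginDiff {V : Type*} [Add V] (A B : Set V) : Set V :=
  {a | ∀ b ∈ B, a + b ∈ A}

/-- **Recursive feasibility of the stochastic MPC problem.**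
Given a terminal set `Zf ⊆ X ⊖ Rf` that is positively invariant under `v = Kz` with
`K Zf ⊆ U ⊖ K Rf`, terminal tightening set `Rf` containing all state tightening sets `Rx j`
and with `K Rf` containing all input tightening sets `Ru j`, and a feasible solution
`v 0, …, v (N-1)` with nominal states `z 0, …, z N` at time `k`, the shifted candidate
solution (appending the terminal feedback `K ⬝ z N`) is feasible at time `k + 1`. -/
theorem mpc_recursive_feasibility
    {nx nu : ℕ}
    (A : Matrix (Fin nx) (Fin nx) ℝ) (B : Matrix (Fin nx) (Fin nu) ℝ)
    (K : Matrix (Fin nu) (Fin nx) ℝ)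
    (X : Set (Fin nx → ℝ)) (U : Set (Fin nu → ℝ))
    (Nbar : ℕ) (Rx : ℕ → Set (Fin nx → ℝ)) (Ru : ℕ → Set (Fin nu → ℝ))
    (Rf : Set (Fin nx → ℝ)) (Zf : Set (Fin nx → ℝ))
    (hRfx : ∀ j ≤ Nbar, Rx j ⊆ Rf)
    (hRfu : ∀ j ≤ Nbar, Ru j ⊆ (fun r => K *ᵥ r) '' Rf)
    (hZfX : Zf ⊆ pontryaginDiff X Rf)
    (hZfInv : ∀ z ∈ Zf, (A + B * K) *ᵥ z ∈ Zf)
    (hZfU : (fun z => K *ᵥ z) '' Zf ⊆ pontryaginDiff U ((fun r => K *ᵥ r) '' Rf))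
    (k N : ℕ) (hN : 1 ≤ N) (hk : k + 1 + N ≤ Nbar)
    (v : ℕ → Fin nu → ℝ) (z : ℕ → Fin nx → ℝ)
    (hdyn : ∀ i < N, z (i + 1) = A *ᵥ z i + B *ᵥ v i)
    (hz : ∀ i < N, z i ∈ pontryaginDiff X (Rx (i + k)))
    (hv : ∀ i < N, v i ∈ pontryaginDiff U (Ru (i + k)))
    (hzN : z N ∈ Zf)
    (vbar : ℕ → Fin nu → ℝ)
    (hvbar : ∀ i, vbar i = if i + 1 < N then v (i + 1) else K *ᵥ z N)
    (zbar : ℕ → Fin nx → ℝ)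
    (hzbar : ∀ i, zbar i = if i < N then z (i + 1) else (A + B * K) *ᵥ z N) :
    (∀ i < N, zbar (i + 1) = A *ᵥ zbar i + B *ᵥ vbar i) ∧
      (∀ i < N, zbar i ∈ pontryaginDiff X (Rx (i + k + 1))) ∧
      (∀ i < N, vbar i ∈ pontryaginDiff U (Ru (i + k + 1))) ∧
      zbar N ∈ Zf := by
  have hmono : ∀ {V : Type} [inst : Add V] (S : Set V) {T T' : Set V}, T ⊆ T' →
      pontryaginDiff S T' ⊆ pontryaginDiff S T := by
    intro V _ S T T' hTT' a ha b hb
    exact ha b (hTT' hb)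
  refine ⟨?_, ?_, ?_, ?_⟩
  · intro i hi
    rcases lt_or_ge (i + 1) N with h | h
    · rw [hzbar (i + 1), hzbar i, hvbar i, if_pos h, if_pos h, if_pos hi]
      exact hdyn (i + 1) h
    · have hiN : i + 1 = N := le_antisymm hi h
      rw [hzbar (i + 1), if_neg (show ¬ i + 1 < N by omega), hzbar i, if_pos hi,
        hvbar i, if_neg (show ¬ i + 1 < N by omega), hiN,
        Matrix.add_mulVec, ← Matrix.mulVec_mulVec]
  · intro i hi
    rcases lt_or_ge (i + 1) N with h | h
    · rw [hzbar i, if_pos hi]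
      have := hz (i + 1) h
      rwa [show i + 1 + k = i + k + 1 by ring] at this
    · have hiN : i + 1 = N := le_antisymm hi h
      rw [hzbar i, if_pos hi, hiN]
      exact hmono X (hRfx (i + k + 1) (by omega)) (hZfX hzN)
  · intro i hi
    rcases lt_or_ge (i + 1) N with h | h
    · rw [hvbar i, if_pos h]
      have := hv (i + 1) h
      rwa [show i + 1 + k = i + k + 1 by ring] at this
    · rw [hvbar i, if_neg (by omega)]
      exact hmono U (hRfu (i + k + 1) (by omega)) (hZfU ⟨z N, hzN, rfl⟩)
  · rw [hzbar N, if_neg (by omega)]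
    exact hZfInv (z N) hzN
end

section
/- Let A_K = A + BK be an n_x-by-n_x matrix, K an n_u-by-n_x matrix, Q a positive semidefinite n_x-by-n_x matrix, R a positive definite n_u-by-n_u matrix, and P a symmetric matrix satisfying the Lyapunov equation A_K^T P A_K - P = -(Q + K^T R K). Let x be a square-integrable random vector in R^{n_x}, and let w be a square-integrable random vector in R^{n_x}, independent of x, with zero mean and covariance matrix Sigma^w. Then E( ||A_K x + w||_P^2 - ||x||_P^2 + ||x||_Q^2 + ||Kx||_R^2 ) = trace(P Sigma^w), where ||v||_M^2 denotes v^T M v. (This identity is the key step in the expected cost decrease of Theorem 3.) -/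
/-!
Write `y = A_K x`. Expanding `‖y + w‖_P²` gives `‖y‖_P² + yᵀ P w + wᵀ P y + ‖w‖_P²`, and the
Lyapunov equation turns `‖y‖_P² - ‖x‖_P² + ‖x‖_Q² + ‖K x‖_R²` into `0` pointwise. Taking
expectations, each bilinear term `E(uᵀ M v)` equals `trace (M E(v uᵀ))`; the cross moments of
`A_K x` and `w` vanish by independence and `E w = 0`, and `E(w wᵀ) = Σʷ`.
-/

open MeasureTheory ProbabilityTheory Matrix

section QuadraticForm

variable {m n p R : Type*} [Fintype m] [Fintype n] [Fintype p] [CommRing R]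

lemma mulVec_dotProduct_mulVec_mulVec (A : Matrix m n R) (P : Matrix m m R) (v : n → R) :
    (A *ᵥ v) ⬝ᵥ (P *ᵥ (A *ᵥ v)) = v ⬝ᵥ ((Aᵀ * P * A) *ᵥ v) := by
  rw [← mulVec_mulVec, ← mulVec_mulVec, dotProduct_transpose_mulVec, dotProduct_comm]

lemma dotProduct_mulVec_eq_sum (u : m → R) (M : Matrix m n R) (v : n → R) :
    u ⬝ᵥ (M *ᵥ v) = ∑ i, ∑ j, M i j * (u i * v j) := by
  simp only [dotProduct, mulVec, Finset.mul_sum]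
  exact Finset.sum_congr rfl fun i _ => Finset.sum_congr rfl fun j _ => by ring

lemma lyapunov_step_identity {A P Q : Matrix m m R} {K : Matrix p m R} {S : Matrix p p R}
    (hlyap : Aᵀ * P * A - P = -(Q + Kᵀ * S * K)) (x w : m → R) :
    (A *ᵥ x + w) ⬝ᵥ (P *ᵥ (A *ᵥ x + w)) - x ⬝ᵥ (P *ᵥ x) + x ⬝ᵥ (Q *ᵥ x)
        + (K *ᵥ x) ⬝ᵥ (S *ᵥ (K *ᵥ x))
      = (A *ᵥ x) ⬝ᵥ (P *ᵥ w) + w ⬝ᵥ (P *ᵥ (A *ᵥ x)) + w ⬝ᵥ (P *ᵥ w) := by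
  have hAPA : Aᵀ * P * A = P - Q - Kᵀ * S * K := by
    rw [sub_eq_iff_eq_add.mp hlyap]; noncomm_ring
  have hquad := mulVec_dotProduct_mulVec_mulVec A P x
  rw [hAPA, sub_mulVec, sub_mulVec, dotProduct_sub, dotProduct_sub,
    ← mulVec_dotProduct_mulVec_mulVec K S x] at hquad
  simp only [mulVec_add, dotProduct_add, add_dotProduct, hquad]
  ring

end QuadraticForm

section SecondMoments

variable {Ω m n : Type*} [MeasurableSpace Ω] {μ : Measure Ω}

noncomputable def crossMoment (μ : Measure Ω) (u : Ω → m → ℝ) (v : Ω → n → ℝ) : Matrix m n ℝ :=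
  Matrix.of fun i j => ∫ ω, u ω i * v ω j ∂μ

lemma crossMoment_transpose (u : Ω → m → ℝ) (v : Ω → n → ℝ) :
    (crossMoment μ u v)ᵀ = crossMoment μ v u := by
  ext i j
  simp only [crossMoment, transpose_apply, of_apply, mul_comm]

lemma memLp_mulVec_apply_s11 [Fintype n] {q : ENNReal} (A : Matrix m n ℝ) {x : Ω → n → ℝ}
    (hx : ∀ j, MemLp (fun ω => x ω j) q μ) (i : m) : MemLp (fun ω => (A *ᵥ x ω) i) q μ := by
  simp only [mulVec, dotProduct]
  exact memLp_finsetSum _ fun j _ => (hx j).const_mul (A i j)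

variable {u : Ω → m → ℝ} {v : Ω → n → ℝ}

lemma integrable_apply_mul_apply (hu : ∀ i, MemLp (fun ω => u ω i) 2 μ)
    (hv : ∀ j, MemLp (fun ω => v ω j) 2 μ) (i : m) (j : n) :
    Integrable (fun ω => u ω i * v ω j) μ :=
  (hu i).integrable_mul (hv j)

lemma integral_dotProduct_mulVec [Fintype m] [Fintype n] (hu : ∀ i, MemLp (fun ω => u ω i) 2 μ)
    (hv : ∀ j, MemLp (fun ω => v ω j) 2 μ) (M : Matrix m n ℝ) :
    ∫ ω, u ω ⬝ᵥ (M *ᵥ v ω) ∂μ = (M * crossMoment μ v u).trace := by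
  simp_rw [dotProduct_mulVec_eq_sum]
  rw [integral_finsetSum _ fun i _ => integrable_finsetSum _ fun j _ =>
    (integrable_apply_mul_apply hu hv i j).const_mul (M i j)]
  simp_rw [integral_finsetSum _ fun j _ => (integrable_apply_mul_apply hu hv _ j).const_mul (M _ j),
    integral_const_mul]
  simp only [trace, diag, mul_apply, crossMoment, of_apply, mul_comm (v _ _)]

lemma integrable_dotProduct_mulVec [Fintype m] [Fintype n] (hu : ∀ i, MemLp (fun ω => u ω i) 2 μ)
    (hv : ∀ j, MemLp (fun ω => v ω j) 2 μ) (M : Matrix m n ℝ) :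
    Integrable (fun ω => u ω ⬝ᵥ (M *ᵥ v ω)) μ := by
  simp_rw [dotProduct_mulVec_eq_sum]
  exact integrable_finsetSum _ fun i _ => integrable_finsetSum _ fun j _ =>
    (integrable_apply_mul_apply hu hv i j).const_mul _

lemma crossMoment_eq_zero_of_indepFun (huv : IndepFun u v μ)
    (hu : ∀ i, AEStronglyMeasurable (fun ω => u ω i) μ)
    (hv : ∀ j, AEStronglyMeasurable (fun ω => v ω j) μ) (hv0 : ∀ j, ∫ ω, v ω j ∂μ = 0) :
    crossMoment μ u v = 0 := by
  ext i j
  have hij : IndepFun (fun ω => u ω i) (fun ω => v ω j) μ :=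
    huv.comp (measurable_pi_apply i) (measurable_pi_apply j)
  rw [crossMoment, of_apply, hij.integral_fun_mul_eq_mul_integral (hu i) (hv j), hv0 j,
    mul_zero, Matrix.zero_apply]

end SecondMoments

theorem expected_cost_decrease_identity_general
    {nx nu : ℕ} {Ω : Type*} [MeasurableSpace Ω] (μ : Measure Ω)
    (A_K : Matrix (Fin nx) (Fin nx) ℝ) (K : Matrix (Fin nu) (Fin nx) ℝ)
    (Q P : Matrix (Fin nx) (Fin nx) ℝ) (R : Matrix (Fin nu) (Fin nu) ℝ)
    (hlyap : A_Kᵀ * P * A_K - P = -(Q + Kᵀ * R * K))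
    (x w : Ω → Fin nx → ℝ)
    (hxL2 : ∀ i, MemLp (fun ω => x ω i) 2 μ)
    (hwL2 : ∀ i, MemLp (fun ω => w ω i) 2 μ)
    (hindep : IndepFun x w μ)
    (hwmean : ∀ i, (∫ ω, w ω i ∂μ) = 0)
    (Sigmaw : Matrix (Fin nx) (Fin nx) ℝ)
    (hSigmaw : ∀ i j, Sigmaw i j = ∫ ω, w ω i * w ω j ∂μ) :
    (∫ ω, ((A_K *ᵥ x ω + w ω) ⬝ᵥ (P *ᵥ (A_K *ᵥ x ω + w ω))
        - x ω ⬝ᵥ (P *ᵥ x ω) + x ω ⬝ᵥ (Q *ᵥ x ω)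
        + (K *ᵥ x ω) ⬝ᵥ (R *ᵥ (K *ᵥ x ω))) ∂μ) = (P * Sigmaw).trace := by
  have hyL2 : ∀ i, MemLp (fun ω => (A_K *ᵥ x ω) i) 2 μ := memLp_mulVec_apply_s11 A_K hxL2
  have hyw : IndepFun (fun ω => A_K *ᵥ x ω) w μ :=
    hindep.comp (continuous_const.matrix_mulVec continuous_id).measurable measurable_id
  have hcross : crossMoment μ (fun ω => A_K *ᵥ x ω) w = 0 :=
    crossMoment_eq_zero_of_indepFun hyw (fun i => (hyL2 i).1) (fun j => (hwL2 j).1) hwmean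
  have hSigma : Sigmaw = crossMoment μ w w := ext hSigmaw
  have hyPw := integrable_dotProduct_mulVec hyL2 hwL2 P
  have hwPy := integrable_dotProduct_mulVec hwL2 hyL2 P
  have hwPw := integrable_dotProduct_mulVec hwL2 hwL2 P
  simp_rw [lyapunov_step_identity hlyap]
  rw [integral_add (by exact hyPw.add hwPy) hwPw, integral_add hyPw hwPy,
    integral_dotProduct_mulVec hyL2 hwL2, integral_dotProduct_mulVec hwL2 hyL2,
    integral_dotProduct_mulVec hwL2 hwL2, ← crossMoment_transpose, hcross, hSigma]
  simp

/-- **Expected cost decrease identity.**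
If `P` is symmetric and solves the Lyapunov equation `A_Kᵀ P A_K - P = -(Q + Kᵀ R K)`, `x` is
a square-integrable random vector and `w` is a square-integrable zero-mean random vector with
covariance `Sigmaw`, independent of `x`, then
`E(‖A_K x + w‖_P² - ‖x‖_P² + ‖x‖_Q² + ‖K x‖_R²) = trace (P * Sigmaw)`. -/
theorem expected_cost_decrease_identity
    {nx nu : ℕ} {Ω : Type*} [MeasurableSpace Ω] (μ : Measure Ω) [IsProbabilityMeasure μ]
    (A_K : Matrix (Fin nx) (Fin nx) ℝ) (K : Matrix (Fin nu) (Fin nx) ℝ)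
    (Q P : Matrix (Fin nx) (Fin nx) ℝ) (R : Matrix (Fin nu) (Fin nu) ℝ)
    (hQ : Q.PosSemidef) (hR : R.PosDef) (hP : P.IsSymm)
    (hlyap : A_Kᵀ * P * A_K - P = -(Q + Kᵀ * R * K))
    (x w : Ω → Fin nx → ℝ)
    (hxmeas : Measurable x) (hwmeas : Measurable w)
    (hxL2 : ∀ i, MemLp (fun ω => x ω i) 2 μ)
    (hwL2 : ∀ i, MemLp (fun ω => w ω i) 2 μ)
    (hindep : IndepFun x w μ)
    (hwmean : ∀ i, (∫ ω, w ω i ∂μ) = 0)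
    (Sigmaw : Matrix (Fin nx) (Fin nx) ℝ)
    (hSigmaw : ∀ i j, Sigmaw i j = ∫ ω, w ω i * w ω j ∂μ) :
    (∫ ω, ((A_K *ᵥ x ω + w ω) ⬝ᵥ (P *ᵥ (A_K *ᵥ x ω + w ω))
        - x ω ⬝ᵥ (P *ᵥ x ω) + x ω ⬝ᵥ (Q *ᵥ x ω)
        + (K *ᵥ x ω) ⬝ᵥ (R *ᵥ (K *ᵥ x ω))) ∂μ) = (P * Sigmaw).trace :=
  expected_cost_decrease_identity_general μ A_K K Q P R hlyap x w hxL2 hwL2 hindep hwmean Sigmaw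
    hSigmaw
end
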